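/- arXiv:2408.16092 — 2 statements merged into one kernel-verified Lean document; each statement's English description precedes it below -/
import Mathlib

section
/- Consider n tasks arriving at time 0, where task i (for 1 ≤ i ≤ n) has slow runtime σ_i = 2^i and fast runtime π_i = 2^(i-1). For every k with 1 ≤ k ≤ n, the first k tasks admit a schedule with completion time at most 2^(k-1): run tasks 1 through k-1 each on their own slow machine and task k on the fast machine. Moreover no schedule of the first k tasks completes before time 2^(k-1). -/
/-!
Task `k` alone needs time `2^(k-1)` on the fast machine and `2^k` on a slow one, which gives
the lower bound. Conversely, putting task `k` on the fast machine and every task `i < k` on its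
own slow machine finishes by `max (2^(k-1)) (2^i) = 2^(k-1)`.
-/

/-- Makespan of the schedule running the tasks of `S` on the fast machine
(back-to-back, task `i` taking fast time `2^(i-1)`) and all other tasks of
`{1, …, k}` each on their own slow machine (task `i` taking slow time `2^i`). -/
def makespan7 (k : ℕ) (S : Finset ℕ) : ℕ :=
  max (∑ i ∈ S, 2 ^ (i - 1)) ((Finset.Icc 1 k \ S).sup fun i => 2 ^ i)

theorem makespan7_singleton (k : ℕ) : makespan7 k {k} = 2 ^ (k - 1) := by
  rw [makespan7, Finset.sum_singleton, max_eq_left_iff, Finset.sup_le_iff]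
  intro i hi
  simp only [Finset.mem_sdiff, Finset.mem_Icc, Finset.mem_singleton] at hi
  exact Nat.pow_le_pow_right two_pos (by omega)

theorem pow_pred_le_makespan7 {k i : ℕ} (S : Finset ℕ) (hi : i ∈ Finset.Icc 1 k) :
    2 ^ (i - 1) ≤ makespan7 k S := by
  by_cases hiS : i ∈ S
  · exact le_max_of_le_left
      (Finset.single_le_sum (f := fun j => 2 ^ (j - 1)) (fun _ _ => Nat.zero_le _) hiS)
  · refine le_max_of_le_right ?_
    calc 2 ^ (i - 1) ≤ 2 ^ i := Nat.pow_le_pow_right two_pos (Nat.sub_le i 1)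
      _ ≤ _ := Finset.le_sup (f := fun j => 2 ^ j) (Finset.mem_sdiff.mpr ⟨hi, hiS⟩)

theorem stmt_7_general (k : ℕ) (hk : 1 ≤ k) :
    (∃ S ⊆ Finset.Icc 1 k, makespan7 k S ≤ 2 ^ (k - 1)) ∧
    ∀ S ⊆ Finset.Icc 1 k, 2 ^ (k - 1) ≤ makespan7 k S := by
  have hk_mem : k ∈ Finset.Icc 1 k := Finset.mem_Icc.mpr ⟨hk, le_rfl⟩
  exact ⟨⟨{k}, Finset.singleton_subset_iff.mpr hk_mem, (makespan7_singleton k).le⟩,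
    fun S _ => pow_pred_le_makespan7 S hk_mem⟩

/-- For tasks 1,…,n with σ_i = 2^i and π_i = 2^(i-1), for every 1 ≤ k ≤ n the
first k tasks admit a schedule with completion time at most 2^(k-1), and no
schedule of the first k tasks completes before time 2^(k-1). -/
theorem stmt_7 (n k : ℕ) (hk : 1 ≤ k) (hkn : k ≤ n) :
    (∃ S ⊆ Finset.Icc 1 k, makespan7 k S ≤ 2 ^ (k - 1)) ∧
    ∀ S ⊆ Finset.Icc 1 k, 2 ^ (k - 1) ≤ makespan7 k S :=
  stmt_7_general k hk
end

section
/- Consider finitely many tasks, task i having slow runtime σ_i > 0 and fast runtime π_i > 0, all arriving at time 0. Define, for a subset S of tasks, the makespan M(S) = max(Σ_{i∈S} π_i, max_{i∉S} σ_i) (with max over the empty set equal to 0), corresponding to running S on the fast machine back-to-back and the rest each on its own slow machine. Then the minimum of M(S) over all subsets S equals the minimum over all valid schedules of the completion time, and moreover if C denotes this minimum then the set S* = {i : σ_i > C} achieves M(S*) = C. -/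
open Finset

/-- Makespan of the schedule running the tasks of `S` back-to-back on the fast
machine and every other task on its own slow machine. -/
def makespan15 {n : ℕ} (σ π : Fin n → ℝ) (S : Finset (Fin n)) : ℝ :=
  max (∑ i ∈ S, π i) (Sᶜ.fold max 0 σ)

/-- The optimal makespan over all subset choices for the fast machine. -/
noncomputable def optC {n : ℕ} (σ π : Fin n → ℝ) : ℝ :=
  (Finset.univ : Finset (Finset (Fin n))).inf' ⟨∅, Finset.mem_univ ∅⟩ (makespan15 σ π)

/-!
The makespan of a schedule is at least `M(S)` for the set `S` of tasks it puts on the fast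
machine: the fast tasks occupy disjoint intervals inside `[0, c]`, so their total length is at
most `c`, and every slow task finishes at or after its slow runtime. Conversely, running the tasks
of any `S` back-to-back realises `M(S)`, so both minima agree. Finally, if `M(S) ≤ C` then every
task with `σ i > C` lies in `S`, hence the threshold set `{i | C < σ i}` is a subset of `S` and
has makespan at most `C`.
-/

theorem sum_le_of_pairwise_disjoint_intervals {ι : Type*} [DecidableEq ι] (len start : ι → ℝ)
    (hlen : ∀ i, 0 < len i) (s : Finset ι) {a b : ℝ} (hab : a ≤ b)
    (hstart : ∀ i ∈ s, a ≤ start i) (hend : ∀ i ∈ s, start i + len i ≤ b)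
    (hdisj : ∀ i ∈ s, ∀ j ∈ s, i ≠ j →
      start i + len i ≤ start j ∨ start j + len j ≤ start i) :
    ∑ i ∈ s, len i ≤ b - a := by
  induction s using Finset.strongInduction generalizing b with
  | _ s ih =>
    rcases s.eq_empty_or_nonempty with rfl | hne
    · simpa using hab
    obtain ⟨i, hi, hlast⟩ := s.exists_max_image start hne
    -- the task starting last is preceded by all the others, which therefore fit in `[a, start i]`
    have hrest : ∑ j ∈ s.erase i, len j ≤ start i - a := by
      refine ih _ (erase_ssubset hi) (hstart i hi) (fun j hj => hstart j (mem_of_mem_erase hj))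
        (fun j hj => ?_) (fun j hj k hk => hdisj j (mem_of_mem_erase hj) k (mem_of_mem_erase hk))
      rcases hdisj j (mem_of_mem_erase hj) i hi (ne_of_mem_erase hj) with h | h
      · exact h
      · linarith [hlast j (mem_of_mem_erase hj), hlen j, hlen i]
    rw [← add_sum_erase s len hi]
    linarith [hend i hi]

section BackToBack

variable {ι : Type*} [LinearOrder ι] {M : Type*} [AddCommMonoid M]

theorem sum_filter_lt_add_eq_sum_filter_le (s : Finset ι) (f : ι → M) {i : ι} (hi : i ∈ s) :
    ∑ k ∈ s with k < i, f k + f i = ∑ k ∈ s with k ≤ i, f k := by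
  have : s.filter (· ≤ i) = insert i (s.filter (· < i)) := by
    ext k
    simp only [mem_filter, mem_insert, le_iff_lt_or_eq]
    constructor
    · rintro ⟨hk, hlt | rfl⟩
      exacts [Or.inr ⟨hk, hlt⟩, Or.inl rfl]
    · rintro (rfl | ⟨hk, hlt⟩)
      exacts [⟨hi, Or.inr rfl⟩, ⟨hk, Or.inl hlt⟩]
  rw [this, sum_insert (by simp), add_comm]

variable [PartialOrder M] [IsOrderedAddMonoid M] {f : ι → M} (s : Finset ι)

theorem sum_filter_lt_add_le_sum_filter_lt (hf : ∀ i, 0 ≤ f i) {i j : ι} (hi : i ∈ s)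
    (hij : i < j) :
    ∑ k ∈ s with k < i, f k + f i ≤ ∑ k ∈ s with k < j, f k := by
  rw [sum_filter_lt_add_eq_sum_filter_le s f hi]
  exact sum_le_sum_of_subset_of_nonneg
    (monotone_filter_right s fun _ _ hk => lt_of_le_of_lt hk hij) fun k _ _ => hf k

theorem sum_filter_lt_add_le_sum (hf : ∀ i, 0 ≤ f i) {i : ι} (hi : i ∈ s) :
    ∑ k ∈ s with k < i, f k + f i ≤ ∑ k ∈ s, f k := by
  rw [sum_filter_lt_add_eq_sum_filter_le s f hi]
  exact sum_le_sum_of_subset_of_nonneg (filter_subset _ s) fun k _ _ => hf k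

end BackToBack

section Schedule

variable {ι : Type*} [LinearOrder ι] (p : ι → ℝ) (S : Finset ι)

def backToBackStart (i : ι) : ℝ :=
  if i ∈ S then ∑ j ∈ S with j < i, p j else 0

variable {p}

theorem backToBackStart_nonneg (hp : ∀ i, 0 ≤ p i) (i : ι) : 0 ≤ backToBackStart p S i := by
  unfold backToBackStart
  split_ifs
  exacts [sum_nonneg fun j _ => hp j, le_rfl]

theorem backToBackStart_add_le_sum (hp : ∀ i, 0 ≤ p i) {i : ι} (hi : i ∈ S) :
    backToBackStart p S i + p i ≤ ∑ j ∈ S, p j := by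
  simpa only [backToBackStart, if_pos hi] using sum_filter_lt_add_le_sum S hp hi

theorem backToBackStart_disjoint (hp : ∀ i, 0 ≤ p i) {i j : ι} (hi : i ∈ S) (hj : j ∈ S)
    (hij : i ≠ j) :
    backToBackStart p S i + p i ≤ backToBackStart p S j ∨
      backToBackStart p S j + p j ≤ backToBackStart p S i := by
  simp only [backToBackStart, if_pos hi, if_pos hj]
  rcases hij.lt_or_gt with h | h
  exacts [Or.inl (sum_filter_lt_add_le_sum_filter_lt S hp hi h),
    Or.inr (sum_filter_lt_add_le_sum_filter_lt S hp hj h)]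

end Schedule

section Makespan

variable {n : ℕ} {σ π : Fin n → ℝ} {S : Finset (Fin n)} {C : ℝ}

theorem makespan15_le_iff :
    makespan15 σ π S ≤ C ↔ ∑ i ∈ S, π i ≤ C ∧ 0 ≤ C ∧ ∀ i ∉ S, σ i ≤ C := by
  simp only [makespan15, max_le_iff, fold_max_le, mem_compl]

variable (σ π)

theorem optC_le_makespan15 (S : Finset (Fin n)) : optC σ π ≤ makespan15 σ π S :=
  inf'_le _ (mem_univ S)

theorem exists_makespan15_eq_optC : ∃ S, makespan15 σ π S = optC σ π := by
  obtain ⟨S, -, hS⟩ := exists_mem_eq_inf' _ (makespan15 σ π)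
  exact ⟨S, hS.symm⟩

variable {σ π}

theorem makespan15_le_completionTime (hπ : ∀ i, 0 < π i) (fast : Fin n → Bool)
    (start : Fin n → ℝ) (hstart : ∀ i, 0 ≤ start i)
    (hdisj : ∀ i j, i ≠ j → fast i = true → fast j = true →
      start i + π i ≤ start j ∨ start j + π j ≤ start i) :
    makespan15 σ π {i | fast i = true} ≤
      univ.fold max 0 (fun i => start i + if fast i then π i else σ i) := by
  obtain ⟨hc, hdone⟩ := (fold_max_le _).mp (le_refl
    (univ.fold max 0 (fun i => start i + if fast i then π i else σ i)))
  refine makespan15_le_iff.mpr ⟨?_, hc, fun i hi => ?_⟩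
  · simpa using sum_le_of_pairwise_disjoint_intervals π start hπ _ hc (fun i _ => hstart i)
      (fun i hi => by simpa [(mem_filter.mp hi).2] using hdone i (mem_univ i))
      (fun i hi j hj hij => hdisj i j hij (mem_filter.mp hi).2 (mem_filter.mp hj).2)
  · have := hdone i (mem_univ i)
    simp only [mem_filter, mem_univ, true_and, Bool.not_eq_true] at hi
    simp only [hi, Bool.false_eq_true, if_false] at this
    linarith [hstart i]

theorem optC_le_completionTime (hπ : ∀ i, 0 < π i) (fast : Fin n → Bool)
    (start : Fin n → ℝ) (hstart : ∀ i, 0 ≤ start i)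
    (hdisj : ∀ i j, i ≠ j → fast i = true → fast j = true →
      start i + π i ≤ start j ∨ start j + π j ≤ start i) :
    optC σ π ≤ univ.fold max 0 (fun i => start i + if fast i then π i else σ i) :=
  (optC_le_makespan15 σ π _).trans (makespan15_le_completionTime hπ fast start hstart hdisj)

theorem completionTime_backToBack_le (hπ : ∀ i, 0 ≤ π i) (S : Finset (Fin n)) :
    univ.fold max 0 (fun i => backToBackStart π S i + if decide (i ∈ S) then π i else σ i) ≤
      makespan15 σ π S := by
  obtain ⟨hfast, hC, hslow⟩ := makespan15_le_iff.mp (le_refl (makespan15 σ π S))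
  refine (fold_max_le _).mpr ⟨hC, fun i _ => ?_⟩
  by_cases hi : i ∈ S
  · simpa [hi] using (backToBackStart_add_le_sum S hπ hi).trans hfast
  · simpa [hi, backToBackStart] using hslow i hi

theorem makespan15_threshold_le (hπ : ∀ i, 0 ≤ π i) (hS : makespan15 σ π S ≤ C) :
    makespan15 σ π (univ.filter fun i => C < σ i) ≤ C := by
  obtain ⟨hfast, hC, hslow⟩ := makespan15_le_iff.mp hS
  have hsub : (univ.filter fun i => C < σ i) ⊆ S := fun i hi => by
    by_contra hiS
    exact (mem_filter.mp hi).2.not_ge (hslow i hiS)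
  refine makespan15_le_iff.mpr ⟨?_, hC, fun i hi => ?_⟩
  · exact (sum_le_sum_of_subset_of_nonneg hsub fun i _ _ => hπ i).trans hfast
  · simpa using hi

end Makespan

theorem stmt_15_general {n : ℕ} (σ π : Fin n → ℝ)
    (hπ : ∀ i, 0 < π i) :
    IsLeast {c : ℝ | ∃ (fast : Fin n → Bool) (start : Fin n → ℝ),
        (∀ i, 0 ≤ start i) ∧
        (∀ i j, i ≠ j → fast i = true → fast j = true →
          start i + π i ≤ start j ∨ start j + π j ≤ start i) ∧
        c = Finset.univ.fold max 0
          (fun i => start i + if fast i then π i else σ i)}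
      (optC σ π) ∧
    makespan15 σ π (Finset.univ.filter fun i => optC σ π < σ i) = optC σ π := by
  have hπ₀ : ∀ i, 0 ≤ π i := fun i => (hπ i).le
  obtain ⟨S, hS⟩ := exists_makespan15_eq_optC σ π
  have hdisj : ∀ i j, i ≠ j → decide (i ∈ S) = true → decide (j ∈ S) = true →
      backToBackStart π S i + π i ≤ backToBackStart π S j ∨
        backToBackStart π S j + π j ≤ backToBackStart π S i := fun i j hij hi hj =>
    backToBackStart_disjoint S hπ₀ (of_decide_eq_true hi) (of_decide_eq_true hj) hij
  refine ⟨⟨⟨fun i => decide (i ∈ S), backToBackStart π S, backToBackStart_nonneg S hπ₀, hdisj,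
      (optC_le_completionTime hπ _ _ (backToBackStart_nonneg S hπ₀) hdisj).antisymm ?_⟩, ?_⟩,
    le_antisymm (makespan15_threshold_le hπ₀ hS.le) (optC_le_makespan15 σ π _)⟩
  · exact hS ▸ completionTime_backToBack_le hπ₀ S
  · rintro c ⟨fast, start, hstart, hdisj, rfl⟩
    exact optC_le_completionTime hπ fast start hstart hdisj

/-- For finitely many tasks (all arriving at time 0) with positive slow times σ
and fast times π, the minimum over subsets S of
M(S) = max(Σ_{i∈S} π_i, max_{i∉S} σ_i) equals the minimum completion time over
all valid schedules (each slow task on its own slow machine starting at a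
nonnegative time; the fast machine runs its tasks on disjoint intervals), and
the threshold set S* = {i : σ_i > C} achieves this optimum C. -/
theorem stmt_15 {n : ℕ} (σ π : Fin n → ℝ)
    (hσ : ∀ i, 0 < σ i) (hπ : ∀ i, 0 < π i) :
    IsLeast {c : ℝ | ∃ (fast : Fin n → Bool) (start : Fin n → ℝ),
        (∀ i, 0 ≤ start i) ∧
        (∀ i j, i ≠ j → fast i = true → fast j = true →
          start i + π i ≤ start j ∨ start j + π j ≤ start i) ∧
        c = Finset.univ.fold max 0
          (fun i => start i + if fast i then π i else σ i)}
      (optC σ π) ∧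
    makespan15 σ π (Finset.univ.filter fun i => optC σ π < σ i) = optC σ π :=
  stmt_15_general σ π hπ
end
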